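/- If λ ≥ λ' > 0 and μ > 0, then P₍>₎(λ,μ) − P₍<₎(λ,μ) ≥ P₍>₎(λ',μ) − P₍<₎(λ',μ). In words: against a fixed independent Poisson count with rate μ, the probability of exceeding it minus the probability of falling below it is monotonically nondecreasing in the rate of one's own Poisson count. -/

import Mathlib

/-- The Poisson probability mass function with rate `l`. -/
noncomputable def poissonPMF (l : ℝ) (i : ℕ) : ℝ :=
  Real.exp (-l) * l ^ i / (Nat.factorial i)

/-- Probability that the first of two independent Poisson counts (rates `l`, `m`)
strictly exceeds the second. -/
noncomputable def Pgt (l m : ℝ) : ℝ :=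
  ∑' p : ℕ × ℕ, if p.2 < p.1 then poissonPMF l p.1 * poissonPMF m p.2 else 0

/-- Probability that the first of two independent Poisson counts (rates `l`, `m`)
is strictly less than the second. -/
noncomputable def Plt (l m : ℝ) : ℝ :=
  ∑' p : ℕ × ℕ, if p.1 < p.2 then poissonPMF l p.1 * poissonPMF m p.2 else 0

lemma pmf_nonneg {l : ℝ} (hl : 0 ≤ l) (i : ℕ) : 0 ≤ poissonPMF l i := by
  unfold poissonPMF; positivity

lemma summable_pmf (l : ℝ) : Summable (poissonPMF l) := by
  have h := (Real.summable_pow_div_factorial l).mul_left (Real.exp (-l))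
  refine h.congr fun i => ?_
  simp [poissonPMF, mul_div_assoc]

lemma tsum_pmf (l : ℝ) : ∑' i, poissonPMF l i = 1 := by
  have h1 : ∑' i : ℕ, poissonPMF l i = Real.exp (-l) * ∑' i : ℕ, l ^ i / (Nat.factorial i) := by
    rw [← tsum_mul_left]
    exact tsum_congr fun i => by simp [poissonPMF, mul_div_assoc]
  have h2 : ∑' i : ℕ, l ^ i / (Nat.factorial i : ℝ) = Real.exp l := by
    rw [Real.exp_eq_exp_ℝ, NormedSpace.exp_eq_tsum_div]
  rw [h1, h2, ← Real.exp_add]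
  simp

lemma hasDerivAt_pmf0 (l : ℝ) : HasDerivAt (fun x => poissonPMF x 0) (-poissonPMF l 0) l := by
  have h : HasDerivAt (fun x : ℝ => Real.exp (-x)) (Real.exp (-l) * (-1)) l :=
    (hasDerivAt_neg l).exp
  have heq : (fun x : ℝ => poissonPMF x 0) = fun x => Real.exp (-x) := by
    funext x; simp [poissonPMF]
  rw [heq]
  convert h using 1
  simp [poissonPMF]

lemma hasDerivAt_pmf_succ (l : ℝ) (i : ℕ) :
    HasDerivAt (fun x => poissonPMF x (i + 1)) (poissonPMF l i - poissonPMF l (i + 1)) l := by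
  have he : HasDerivAt (fun x : ℝ => Real.exp (-x)) (Real.exp (-l) * (-1)) l :=
    (hasDerivAt_neg l).exp
  have hp : HasDerivAt (fun x : ℝ => x ^ (i + 1)) ((i + 1 : ℕ) * l ^ i) l := by
    simpa using hasDerivAt_pow (i + 1) l
  have h := (he.mul hp).div_const ((Nat.factorial (i + 1) : ℝ))
  have hfact : (Nat.factorial (i + 1) : ℝ) = (i + 1) * Nat.factorial i := by
    rw [Nat.factorial_succ]; push_cast; ring
  refine h.congr_deriv ?_
  have hne : (Nat.factorial i : ℝ) ≠ 0 := Nat.cast_ne_zero.2 (Nat.factorial_ne_zero i)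
  have hne1 : (i + 1 : ℝ) ≠ 0 := by positivity
  simp only [poissonPMF, hfact, Nat.cast_add, Nat.cast_one]
  field_simp
  ring

noncomputable def S (l : ℝ) (n : ℕ) : ℝ := ∑ i ∈ Finset.range n, poissonPMF l i

lemma hasDerivAt_S (l : ℝ) (n : ℕ) :
    HasDerivAt (fun x => S x (n + 1)) (-poissonPMF l n) l := by
  induction n with
  | zero =>
      refine (hasDerivAt_pmf0 l).congr_of_eventuallyEq ?_
      filter_upwards with x
      simp [S]
  | succ n ih =>
      have h := ih.add (hasDerivAt_pmf_succ l n)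
      have heq : (fun x => S x (n + 1 + 1)) = fun x => S x (n + 1) + poissonPMF x (n + 1) := by
        funext x; simp [S, Finset.sum_range_succ]
      rw [heq]
      refine h.congr_deriv ?_
      ring

lemma S_antitone {l l' : ℝ} (hl' : 0 ≤ l') (hll : l' ≤ l) (n : ℕ) : S l n ≤ S l' n := by
  cases n with
  | zero => simp [S]
  | succ n =>
      have hmono : AntitoneOn (fun x => S x (n + 1)) (Set.Ici (0 : ℝ)) := by
        apply antitoneOn_of_deriv_nonpos (convex_Ici 0)
        · exact fun x _ => ((hasDerivAt_S x n).continuousAt).continuousWithinAt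
        · intro x _
          exact (hasDerivAt_S x n).differentiableAt.differentiableWithinAt
        · intro x hx
          rw [(hasDerivAt_S x n).deriv]
          simp only [interior_Ici, Set.mem_Ioi] at hx
          simpa using pmf_nonneg hx.le n
      exact hmono hl' (hl'.trans hll) hll

lemma S_nonneg {l : ℝ} (hl : 0 ≤ l) (n : ℕ) : 0 ≤ S l n :=
  Finset.sum_nonneg fun i _ => pmf_nonneg hl i

lemma S_le_one {l : ℝ} (hl : 0 ≤ l) (n : ℕ) : S l n ≤ 1 := by
  rw [← tsum_pmf l]
  exact Summable.sum_le_tsum _ (fun i _ => pmf_nonneg hl i) (summable_pmf l)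


section main
variable {l m : ℝ}

lemma summable_prod (hl : 0 ≤ l) (hm : 0 ≤ m) :
    Summable (fun p : ℕ × ℕ => poissonPMF l p.1 * poissonPMF m p.2) :=
  (summable_pmf l).mul_of_nonneg (summable_pmf m) (fun i => pmf_nonneg hl i)
    (fun j => pmf_nonneg hm j)

lemma summable_ite_gt (hl : 0 ≤ l) (j : ℕ) :
    Summable (fun i : ℕ => if j < i then poissonPMF l i else 0) := by
  apply Summable.of_nonneg_of_le (fun i => ?_) (fun i => ?_) (summable_pmf l)
  · split
    · exact pmf_nonneg hl i
    · exact le_rfl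
  · split
    · exact le_rfl
    · exact pmf_nonneg hl i

lemma summable_ite_lt (hl : 0 ≤ l) (j : ℕ) :
    Summable (fun i : ℕ => if i < j then poissonPMF l i else 0) := by
  apply Summable.of_nonneg_of_le (fun i => ?_) (fun i => ?_) (summable_pmf l)
  · split
    · exact pmf_nonneg hl i
    · exact le_rfl
  · split
    · exact le_rfl
    · exact pmf_nonneg hl i

lemma tsum_ite_lt (hl : 0 ≤ l) (j : ℕ) :
    ∑' i : ℕ, (if i < j then poissonPMF l i else 0) = S l j := by
  rw [tsum_eq_sum (s := Finset.range j) (by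
    intro b hb
    simp only [Finset.mem_range] at hb
    simp [hb])]
  apply Finset.sum_congr rfl
  intro i hi
  simp only [Finset.mem_range] at hi
  simp [hi]

lemma tsum_ite_gt (hl : 0 ≤ l) (j : ℕ) :
    ∑' i : ℕ, (if j < i then poissonPMF l i else 0) = 1 - S l (j + 1) := by
  have hle : ∑' i : ℕ, (if i < j + 1 then poissonPMF l i else 0) = S l (j + 1) :=
    tsum_ite_lt hl (j + 1)
  have hsplit : ∀ i : ℕ, poissonPMF l i =
      (if j < i then poissonPMF l i else 0) + (if i < j + 1 then poissonPMF l i else 0) := by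
    intro i
    by_cases h : j < i
    · simp [h, Nat.lt_succ_iff, not_le.2 h]
    · simp [h, Nat.lt_succ_iff, not_lt.1 h]
  have key : ∑' i : ℕ, poissonPMF l i =
      (∑' i : ℕ, (if j < i then poissonPMF l i else 0)) +
      (∑' i : ℕ, (if i < j + 1 then poissonPMF l i else 0)) := by
    rw [← Summable.tsum_add (summable_ite_gt hl j) (summable_ite_lt hl (j + 1))]
    exact tsum_congr hsplit
  rw [tsum_pmf, hle] at key
  linarith

lemma Pgt_eq (hl : 0 ≤ l) (hm : 0 ≤ m) :
    Pgt l m = ∑' j : ℕ, (1 - S l (j + 1)) * poissonPMF m j := by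
  have hsum := summable_prod hl hm
  have hf : Summable (fun p : ℕ × ℕ =>
      if p.2 < p.1 then poissonPMF l p.1 * poissonPMF m p.2 else 0) := by
    apply Summable.of_nonneg_of_le (fun p => ?_) (fun p => ?_) hsum
    · split
      · exact mul_nonneg (pmf_nonneg hl _) (pmf_nonneg hm _)
      · exact le_rfl
    · split
      · exact le_rfl
      · exact mul_nonneg (pmf_nonneg hl _) (pmf_nonneg hm _)
  have hswap : Pgt l m = ∑' c : ℕ × ℕ,
      (if c.1 < c.2 then poissonPMF l c.2 * poissonPMF m c.1 else 0) := by
    unfold Pgt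
    exact ((Equiv.prodComm ℕ ℕ).tsum_eq
      (fun p : ℕ × ℕ => if p.2 < p.1 then poissonPMF l p.1 * poissonPMF m p.2 else 0)).symm
  rw [hswap]
  have hg : Summable (fun c : ℕ × ℕ =>
      if c.1 < c.2 then poissonPMF l c.2 * poissonPMF m c.1 else 0) := hf.prod_symm
  rw [Summable.tsum_prod' hg (fun j => ?_)]
  · apply tsum_congr
    intro j
    have : ∀ i : ℕ, (if j < i then poissonPMF l i * poissonPMF m j else 0) =
        (if j < i then poissonPMF l i else 0) * poissonPMF m j := by
      intro i; split <;> simp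
    calc ∑' i : ℕ, (if j < i then poissonPMF l i * poissonPMF m j else 0)
        = ∑' i : ℕ, (if j < i then poissonPMF l i else 0) * poissonPMF m j :=
          tsum_congr this
      _ = (∑' i : ℕ, (if j < i then poissonPMF l i else 0)) * poissonPMF m j :=
          tsum_mul_right
      _ = (1 - S l (j + 1)) * poissonPMF m j := by rw [tsum_ite_gt hl]
  · apply Summable.of_nonneg_of_le (fun i => ?_) (fun i => ?_)
      (((summable_pmf l).mul_right (poissonPMF m j)))
    · split
      · exact mul_nonneg (pmf_nonneg hl _) (pmf_nonneg hm _)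
      · exact le_rfl
    · split
      · exact le_rfl
      · exact mul_nonneg (pmf_nonneg hl _) (pmf_nonneg hm _)

lemma Plt_eq (hl : 0 ≤ l) (hm : 0 ≤ m) :
    Plt l m = ∑' j : ℕ, S l j * poissonPMF m j := by
  have hsum := summable_prod hl hm
  have hf : Summable (fun p : ℕ × ℕ =>
      if p.1 < p.2 then poissonPMF l p.1 * poissonPMF m p.2 else 0) := by
    apply Summable.of_nonneg_of_le (fun p => ?_) (fun p => ?_) hsum
    · split
      · exact mul_nonneg (pmf_nonneg hl _) (pmf_nonneg hm _)
      · exact le_rfl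
    · split
      · exact le_rfl
      · exact mul_nonneg (pmf_nonneg hl _) (pmf_nonneg hm _)
  have hswap : Plt l m = ∑' c : ℕ × ℕ,
      (if c.2 < c.1 then poissonPMF l c.2 * poissonPMF m c.1 else 0) := by
    unfold Plt
    exact ((Equiv.prodComm ℕ ℕ).tsum_eq
      (fun p : ℕ × ℕ => if p.1 < p.2 then poissonPMF l p.1 * poissonPMF m p.2 else 0)).symm
  rw [hswap]
  have hg : Summable (fun c : ℕ × ℕ =>
      if c.2 < c.1 then poissonPMF l c.2 * poissonPMF m c.1 else 0) := hf.prod_symm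
  rw [Summable.tsum_prod' hg (fun j => ?_)]
  · apply tsum_congr
    intro j
    have : ∀ i : ℕ, (if i < j then poissonPMF l i * poissonPMF m j else 0) =
        (if i < j then poissonPMF l i else 0) * poissonPMF m j := by
      intro i; split <;> simp
    calc ∑' i : ℕ, (if i < j then poissonPMF l i * poissonPMF m j else 0)
        = ∑' i : ℕ, (if i < j then poissonPMF l i else 0) * poissonPMF m j :=
          tsum_congr this
      _ = (∑' i : ℕ, (if i < j then poissonPMF l i else 0)) * poissonPMF m j :=
          tsum_mul_right
      _ = S l j * poissonPMF m j := by rw [tsum_ite_lt hl]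
  · apply Summable.of_nonneg_of_le (fun i => ?_) (fun i => ?_)
      (((summable_pmf l).mul_right (poissonPMF m j)))
    · split
      · exact mul_nonneg (pmf_nonneg hl _) (pmf_nonneg hm _)
      · exact le_rfl
    · split
      · exact le_rfl
      · exact mul_nonneg (pmf_nonneg hl _) (pmf_nonneg hm _)

lemma summable_D (hl : 0 ≤ l) (hm : 0 ≤ m) :
    Summable (fun j : ℕ => (1 - S l (j + 1) - S l j) * poissonPMF m j) := by
  apply Summable.of_norm_bounded (g := poissonPMF m) (summable_pmf m)
  intro j
  rw [Real.norm_eq_abs, abs_mul, abs_of_nonneg (pmf_nonneg hm j)]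
  have h1 : |1 - S l (j + 1) - S l j| ≤ 1 := by
    rw [abs_le]
    constructor <;>
      [linarith [S_le_one hl (j + 1), S_le_one hl j];
       linarith [S_nonneg hl (j + 1), S_nonneg hl j]]
  nlinarith [pmf_nonneg hm j, abs_nonneg (1 - S l (j + 1) - S l j)]

lemma summable_A (hl : 0 ≤ l) (hm : 0 ≤ m) :
    Summable (fun j : ℕ => (1 - S l (j + 1)) * poissonPMF m j) := by
  apply Summable.of_norm_bounded (g := poissonPMF m) (summable_pmf m)
  intro j
  rw [Real.norm_eq_abs, abs_mul, abs_of_nonneg (pmf_nonneg hm j)]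
  have h1 : |1 - S l (j + 1)| ≤ 1 := by
    rw [abs_le]
    constructor <;> [linarith [S_le_one hl (j + 1)]; linarith [S_nonneg hl (j + 1)]]
  nlinarith [pmf_nonneg hm j, abs_nonneg (1 - S l (j + 1))]

lemma summable_B (hl : 0 ≤ l) (hm : 0 ≤ m) :
    Summable (fun j : ℕ => S l j * poissonPMF m j) := by
  apply Summable.of_norm_bounded (g := poissonPMF m) (summable_pmf m)
  intro j
  rw [Real.norm_eq_abs, abs_mul, abs_of_nonneg (pmf_nonneg hm j),
    abs_of_nonneg (S_nonneg hl j)]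
  nlinarith [pmf_nonneg hm j, S_le_one hl j, S_nonneg hl j]

lemma D_eq (hl : 0 ≤ l) (hm : 0 ≤ m) :
    Pgt l m - Plt l m = ∑' j : ℕ, (1 - S l (j + 1) - S l j) * poissonPMF m j := by
  rw [Pgt_eq hl hm, Plt_eq hl hm, ← Summable.tsum_sub (summable_A hl hm) (summable_B hl hm)]
  exact tsum_congr fun j => by ring

end main

/-- Against a fixed independent Poisson count with rate `m`, the probability of
exceeding it minus the probability of falling below it is monotonically
nondecreasing in the rate of one's own Poisson count: if `l ≥ l' > 0` and `m > 0`,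
then `P₍>₎(l,m) − P₍<₎(l,m) ≥ P₍>₎(l',m) − P₍<₎(l',m)`. -/
theorem Pgt_sub_Plt_monotone (l l' m : ℝ) (hl' : 0 < l') (hll : l' ≤ l) (hm : 0 < m) :
    Pgt l' m - Plt l' m ≤ Pgt l m - Plt l m := by
  have hl'0 : (0:ℝ) ≤ l' := hl'.le
  have hl0 : (0:ℝ) ≤ l := hl'0.trans hll
  rw [D_eq hl'0 hm.le, D_eq hl0 hm.le]
  apply Summable.tsum_le_tsum _ (summable_D hl'0 hm.le) (summable_D hl0 hm.le)
  intro j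
  apply mul_le_mul_of_nonneg_right _ (pmf_nonneg hm.le j)
  have h1 := S_antitone hl'0 hll (j + 1)
  have h2 := S_antitone hl'0 hll j
  linarith
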